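/- Let r ≥ 1 and consider ℚ^r. Let C = {ξ : ξ₁ ≥ ξ₂ ≥ ⋯ ≥ ξ_r ≥ 0}, Φ = {ξ : Σ|ξ_i| ≤ 1}, and D = conv(0, ε₁, (ε₁+ε₂)/2, …, (ε₁+⋯+ε_r)/r) over ℚ. Then Φ ∩ C = D. -/

import Mathlib

/-!
A point `ξ` of the chamber is the combination `∑ cᵢ ωᵢ` of the normalized fundamental weights
`ωᵢ = (ε₀ + ⋯ + εᵢ)/(i + 1)` with coefficients `cᵢ = (i + 1)(ξᵢ - ξᵢ₊₁)` (where `ξᵣ = 0`):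
the `j`-th coordinate of that combination telescopes to `ξⱼ`, and Abel summation gives
`∑ cᵢ = ∑ ξᵢ`. On the chamber these coefficients are nonnegative and `∑ |ξᵢ| = ∑ ξᵢ`, so
`∑ |ξᵢ| ≤ 1` says exactly that `ξ` is a convex combination of `0` and the `ωᵢ`. Conversely
the chamber cut by `∑ ξᵢ ≤ 1` is convex and contains `0` and every `ωᵢ`.
-/

open Finset

theorem sum_smul_mem_convexHull_insert_zero {𝕜 E ι : Type*} [Field 𝕜] [LinearOrder 𝕜]
    [IsStrictOrderedRing 𝕜] [AddCommGroup E] [Module 𝕜 E] [Fintype ι] {c : ι → 𝕜} (v : ι → E)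
    (hc : ∀ i, 0 ≤ c i) (hc_sum : ∑ i, c i ≤ 1) :
    ∑ i, c i • v i ∈ convexHull 𝕜 (insert 0 (Set.range v)) := by
  -- the vertex `0`, indexed by `none`, absorbs the slack weight `1 - ∑ cᵢ`
  have h := (convex_convexHull 𝕜 (insert 0 (Set.range v))).sum_mem
    (t := univ) (w := fun o : Option ι => o.elim (1 - ∑ i, c i) c)
    (z := fun o => o.elim 0 v) ?_ ?_ ?_
  · simpa [Fintype.sum_option] using h
  · rintro (_ | i) _
    exacts [sub_nonneg.2 hc_sum, hc i]
  · simp [Fintype.sum_option]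
  · rintro (_ | i) _
    exacts [subset_convexHull 𝕜 _ (Set.mem_insert _ _),
      subset_convexHull 𝕜 _ (Set.mem_insert_of_mem _ ⟨i, rfl⟩)]

theorem sum_range_succ_mul_sub {R : Type*} [CommRing R] (f : ℕ → R) (m : ℕ) :
    ∑ n ∈ range m, ((n : R) + 1) * (f n - f (n + 1)) = ∑ n ∈ range m, f n - m * f m := by
  induction m with
  | zero => simp
  | succ m ih => rw [sum_range_succ, ih, sum_range_succ]; push_cast; ring

theorem sum_range_ite_le_sub {R : Type*} [AddCommGroup R] (f : ℕ → R) {j m : ℕ} (hjm : j ≤ m) :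
    ∑ n ∈ range m, (if j ≤ n then f n - f (n + 1) else 0) = f j - f m := by
  induction m, hjm using Nat.le_induction with
  | base => simp +contextual [sum_eq_zero, not_le.2, mem_range.1]
  | succ m hjm ih => rw [sum_range_succ, ih, if_pos hjm]; abel

section ExtendByZero

variable {α : Type*} [Zero α] {r : ℕ}

def extendByZero (ξ : Fin r → α) (n : ℕ) : α :=
  if h : n < r then ξ ⟨n, h⟩ else 0

@[simp]
theorem extendByZero_val (ξ : Fin r → α) (i : Fin r) : extendByZero ξ i = ξ i := by
  simp [extendByZero]

@[simp]
theorem extendByZero_self (ξ : Fin r → α) : extendByZero ξ r = 0 := by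
  simp [extendByZero]

end ExtendByZero

section WeylChamber

variable {α : Type*} [Zero α] [LE α] {r : ℕ}

variable (α r) in
def weylChamber : Set (Fin r → α) :=
  {ξ | (∀ i : Fin r, ∀ h : (i : ℕ) + 1 < r, ξ ⟨(i : ℕ) + 1, h⟩ ≤ ξ i) ∧ ∀ i, 0 ≤ ξ i}

theorem mem_weylChamber {ξ : Fin r → α} : ξ ∈ weylChamber α r ↔
    (∀ i : Fin r, ∀ h : (i : ℕ) + 1 < r, ξ ⟨(i : ℕ) + 1, h⟩ ≤ ξ i) ∧ ∀ i, 0 ≤ ξ i :=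
  Iff.rfl

end WeylChamber

section WeightCoeff

variable {R : Type*} [CommRing R] {r : ℕ}

def weightCoeff (ξ : Fin r → R) (i : Fin r) : R :=
  ((i : ℕ) + 1) * (extendByZero ξ i - extendByZero ξ (i + 1))

theorem sum_weightCoeff (ξ : Fin r → R) : ∑ i, weightCoeff ξ i = ∑ i, ξ i := by
  have h := sum_range_succ_mul_sub (extendByZero ξ) r
  rw [extendByZero_self, mul_zero, sub_zero] at h
  simp only [weightCoeff]
  rw [Fin.sum_univ_eq_sum_range
      (fun n => ((n : R) + 1) * (extendByZero ξ n - extendByZero ξ (n + 1))),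
    h, ← Fin.sum_univ_eq_sum_range, funext (extendByZero_val ξ)]

end WeightCoeff

section Chamber

variable {𝕜 : Type*} [Field 𝕜] [LinearOrder 𝕜] [IsStrictOrderedRing 𝕜] {r : ℕ}

def normalizedFundamentalWeight (i : Fin r) : Fin r → 𝕜 :=
  fun j => if j ≤ i then 1 / ((i : ℕ) + 1) else 0

theorem normalizedFundamentalWeight_mem_weylChamber (i : Fin r) :
    normalizedFundamentalWeight i ∈ weylChamber 𝕜 r := by
  refine ⟨fun j h => ?_, fun j => ?_⟩ <;> simp only [normalizedFundamentalWeight, Fin.le_def]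
  · split_ifs <;> first | exact le_rfl | positivity | omega
  · split_ifs <;> positivity

theorem sum_normalizedFundamentalWeight (i : Fin r) :
    ∑ j, normalizedFundamentalWeight (𝕜 := 𝕜) i j = 1 := by
  simp only [normalizedFundamentalWeight]
  rw [sum_ite, sum_const_zero, add_zero, sum_const,
    filter_ge_eq_Iic, Fin.card_Iic, nsmul_eq_mul]
  push_cast
  field_simp

theorem weightCoeff_nonneg {ξ : Fin r → 𝕜} (hξ : ξ ∈ weylChamber 𝕜 r) (i : Fin r) :
    0 ≤ weightCoeff ξ i := by
  refine mul_nonneg (by positivity) (sub_nonneg.2 ?_)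
  rw [extendByZero_val, extendByZero]
  split_ifs with h
  exacts [hξ.1 i h, hξ.2 i]

theorem sum_weightCoeff_smul_normalizedFundamentalWeight (ξ : Fin r → 𝕜) :
    ∑ i, weightCoeff ξ i • normalizedFundamentalWeight i = ξ := by
  ext j
  have hterm : ∀ i : Fin r, weightCoeff ξ i * normalizedFundamentalWeight i j =
      if (j : ℕ) ≤ i then extendByZero ξ i - extendByZero ξ (i + 1) else 0 := by
    intro i
    simp only [weightCoeff, normalizedFundamentalWeight, Fin.le_def]
    split_ifs
    · field_simp
    · rw [mul_zero]
  simp only [Finset.sum_apply, Pi.smul_apply, smul_eq_mul, hterm]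
  rw [Fin.sum_univ_eq_sum_range (fun n => if (j : ℕ) ≤ n then
      extendByZero ξ n - extendByZero ξ (n + 1) else 0),
    sum_range_ite_le_sub _ j.isLt.le, extendByZero_self, extendByZero_val, sub_zero]

theorem convex_weylChamber : Convex 𝕜 (weylChamber 𝕜 r) := by
  intro x hx y hy a b ha hb _
  obtain ⟨hx_anti, hx_nonneg⟩ := hx
  obtain ⟨hy_anti, hy_nonneg⟩ := hy
  refine ⟨fun i h => ?_, fun i => ?_⟩ <;> simp only [Pi.add_apply, Pi.smul_apply, smul_eq_mul]
  · gcongr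
    exacts [hx_anti i h, hy_anti i h]
  · have := hx_nonneg i
    have := hy_nonneg i
    positivity

theorem weylChamber_inter_sum_le_one :
    weylChamber 𝕜 r ∩ {ξ | ∑ i, ξ i ≤ 1} =
      convexHull 𝕜 (insert 0 (Set.range normalizedFundamentalWeight)) := by
  refine subset_antisymm ?_ (convexHull_min ?_ ?_)
  · rintro ξ ⟨hξ, hξ_sum⟩
    rw [← sum_weightCoeff_smul_normalizedFundamentalWeight ξ]
    exact sum_smul_mem_convexHull_insert_zero _ (weightCoeff_nonneg hξ)
      ((sum_weightCoeff ξ).trans_le hξ_sum)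
  · rintro _ (rfl | ⟨i, rfl⟩)
    · exact ⟨⟨fun _ _ => le_rfl, fun _ => le_rfl⟩, by simp⟩
    · exact ⟨normalizedFundamentalWeight_mem_weylChamber i,
        (sum_normalizedFundamentalWeight i).le⟩
  · exact convex_weylChamber.inter (convex_halfSpace_le (f := fun ξ : Fin r → 𝕜 => ∑ i, ξ i)
      ⟨fun _ _ => sum_add_distrib, fun _ _ => (mul_sum _ _ _).symm⟩ 1)

end Chamber

theorem stmt9_general (r : ℕ) :
    {ξ : Fin r → ℚ |
        (∀ i : Fin r, ∀ h : (i : ℕ) + 1 < r, ξ ⟨(i : ℕ) + 1, h⟩ ≤ ξ i) ∧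
        (∀ i, 0 ≤ ξ i) ∧ ∑ i, |ξ i| ≤ 1} =
      convexHull ℚ (insert (0 : Fin r → ℚ)
        (Set.range (fun i : Fin r => fun j : Fin r =>
          if j ≤ i then (1 : ℚ) / ((i : ℕ) + 1) else 0))) := by
  change _ = convexHull ℚ (insert 0 (Set.range normalizedFundamentalWeight))
  rw [← weylChamber_inter_sum_le_one]
  ext ξ
  simp only [Set.mem_ofPred_eq, Set.mem_inter_iff, mem_weylChamber, and_assoc]
  refine and_congr_right fun _ => and_congr_right fun hξ => ?_
  rw [sum_congr rfl fun i _ => abs_of_nonneg (hξ i)]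

/-- Sp(V)/SO(2r+1) case: the intersection of the weight polytope
`{Σ|ξᵢ| ≤ 1}` with the Weyl chamber `{ξ₁ ≥ ⋯ ≥ ξ_r ≥ 0}` equals the simplex
spanned by `0` and the normalized fundamental weights `(ε₁+⋯+εᵢ)/i`. -/
theorem stmt9 (r : ℕ) (hr : 1 ≤ r) :
    {ξ : Fin r → ℚ |
        (∀ i : Fin r, ∀ h : (i : ℕ) + 1 < r, ξ ⟨(i : ℕ) + 1, h⟩ ≤ ξ i) ∧
        (∀ i, 0 ≤ ξ i) ∧ ∑ i, |ξ i| ≤ 1} =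
      convexHull ℚ (insert (0 : Fin r → ℚ)
        (Set.range (fun i : Fin r => fun j : Fin r =>
          if j ≤ i then (1 : ℚ) / ((i : ℕ) + 1) else 0))) :=
  stmt9_general r
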